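/- arXiv:2111.01692 — 4 statements merged into one kernel-verified Lean document; each statement's English description precedes it below -/
import Mathlib

section
/- Let A and M be real symmetric positive definite n×n matrices and define f(B) = trace(A B) + trace(M B⁻¹) on the set of real symmetric positive definite n×n matrices. Then f is strictly geodesically midpoint-convex: for all symmetric positive definite B0 ≠ B1, f(G(B0,B1)) < (1/2) f(B0) + (1/2) f(B1), where G(B0,B1) = B0^{1/2} (B0^{-1/2} B1 B0^{-1/2})^{1/2} B0^{1/2} is the geometric mean (the midpoint of the geodesic joining B0 and B1 on the positive definite manifold). -/
open Matrix

/-- The unique symmetric positive semidefinite square root of a positive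
semidefinite real matrix (junk value `0` off the positive semidefinite cone). -/
noncomputable def msqrt {n : ℕ} (A : Matrix (Fin n) (Fin n) ℝ) :
    Matrix (Fin n) (Fin n) ℝ :=
  letI := Classical.propDecidable A.PosSemidef
  if h : A.PosSemidef then
    (h.1.eigenvectorUnitary : Matrix (Fin n) (Fin n) ℝ) *
      diagonal ((↑) ∘ (√·) ∘ h.1.eigenvalues) *
      (star h.1.eigenvectorUnitary : Matrix (Fin n) (Fin n) ℝ)
  else 0

/-- The geometric mean `G(A,M) = A^{1/2} (A^{-1/2} M A^{-1/2})^{1/2} A^{1/2}` of two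
positive definite matrices; the midpoint of the geodesic joining them on the
positive definite manifold. -/
noncomputable def geomMean {n : ℕ} (A M : Matrix (Fin n) (Fin n) ℝ) :
    Matrix (Fin n) (Fin n) ℝ :=
  msqrt A * msqrt (msqrt A⁻¹ * M * msqrt A⁻¹) * msqrt A

/-! With `S = B₀^{1/2}` and `R = (S⁻¹ B₁ S⁻¹)^{1/2}` we have `B₀ = S²`, `B₁ = S R² S` and
`G(B₀, B₁) = S R S`, so that
`B₀ + B₁ - 2 G = S (R - 1)² S` and `B₀⁻¹ + B₁⁻¹ - 2 G⁻¹ = S⁻¹ (R⁻¹ - 1)² S⁻¹`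
are both of the form `T Tᴴ`. Pairing with a positive definite matrix under the trace, such a
matrix gives a nonnegative number, and a positive one unless `T = 0`; for the first gap `T = 0`
would force `R = 1`, i.e. `B₀ = B₁`. -/

open scoped MatrixOrder ComplexOrder

lemma IsSelfAdjoint.mul_sub_one_mul_star_eq {R : Type*} [Ring R] [StarRing R] {s r : R}
    (hs : IsSelfAdjoint s) (hr : IsSelfAdjoint r) :
    s * (r - 1) * star (s * (r - 1)) = s * s + s * (r * r) * s - (s * r * s + s * r * s) := by
  rw [star_mul, star_sub, star_one, hr.star_eq, hs.star_eq]
  noncomm_ring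

namespace Matrix

variable {m n 𝕜 : Type*} [Fintype m] [Fintype n] [RCLike 𝕜] {A S R : Matrix n n 𝕜}

lemma PosSemidef.trace_mul_mul_conjTranspose_nonneg (hA : A.PosSemidef)
    (T : Matrix n m 𝕜) : 0 ≤ (A * (T * Tᴴ)).trace := by
  rw [← Matrix.mul_assoc, trace_mul_comm, ← Matrix.mul_assoc]
  exact (hA.conjTranspose_mul_mul_same T).trace_nonneg

lemma PosDef.trace_mul_mul_conjTranspose_pos [DecidableEq n] (hA : A.PosDef)
    {T : Matrix n m 𝕜} (hT : T ≠ 0) : 0 < (A * (T * Tᴴ)).trace := by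
  set C := CFC.sqrt A
  have hC : Cᴴ = C := (CFC.sqrt_nonneg A).posSemidef.isHermitian
  have hCC : C * C = A := CFC.sqrt_mul_sqrt_self A
  have hCT : C * T ≠ 0 := fun h ↦ hT <| by
    have hC_unit : IsUnit C.det :=
      (isUnit_iff_isUnit_det C).mp ((CFC.isUnit_sqrt_iff A).mpr hA.isUnit)
    rw [← nonsing_inv_mul_cancel_left C T hC_unit, h, Matrix.mul_zero]
  have htrace : (A * (T * Tᴴ)).trace = (C * T * (C * T)ᴴ).trace := by
    rw [conjTranspose_mul, hC, ← hCC, Matrix.mul_assoc, trace_mul_comm C]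
    simp only [Matrix.mul_assoc]
  rw [htrace]
  exact (posSemidef_self_mul_conjTranspose _).trace_nonneg.lt_of_ne'
    (trace_mul_conjTranspose_self_eq_zero_iff.not.mpr hCT)

lemma PosSemidef.inv_sqrt_mul_mul_inv_sqrt [DecidableEq n] {B : Matrix n n 𝕜}
    (hB : B.PosSemidef) (A : Matrix n n 𝕜) :
    ((CFC.sqrt A)⁻¹ * B * (CFC.sqrt A)⁻¹).PosSemidef := by
  have h := hB.mul_mul_conjTranspose_same (CFC.sqrt A)⁻¹
  rwa [(CFC.sqrt_nonneg A).posSemidef.inv.isHermitian.eq] at h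

lemma trace_mul_mul_sub_one_mul_conjTranspose [DecidableEq n] (hS : S.IsHermitian)
    (hR : R.IsHermitian) :
    (A * (S * (R - 1) * (S * (R - 1))ᴴ)).trace =
      (A * (S * S)).trace + (A * (S * (R * R) * S)).trace - 2 * (A * (S * R * S)).trace := by
  rw [← star_eq_conjTranspose, hS.isSelfAdjoint.mul_sub_one_mul_star_eq hR.isSelfAdjoint,
    Matrix.mul_sub, Matrix.mul_add, Matrix.mul_add, trace_sub, trace_add, trace_add, two_mul]

lemma PosSemidef.two_mul_trace_mul_conj_le [DecidableEq n] (hA : A.PosSemidef)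
    (hS : S.IsHermitian) (hR : R.IsHermitian) :
    2 * (A * (S * R * S)).trace ≤ (A * (S * S)).trace + (A * (S * (R * R) * S)).trace := by
  rw [← sub_nonneg, ← trace_mul_mul_sub_one_mul_conjTranspose hS hR]
  exact hA.trace_mul_mul_conjTranspose_nonneg _

lemma PosDef.two_mul_trace_mul_conj_lt [DecidableEq n] (hA : A.PosDef) (hS : S.IsHermitian)
    (hR : R.IsHermitian) (hSR : S * (R - 1) ≠ 0) :
    2 * (A * (S * R * S)).trace < (A * (S * S)).trace + (A * (S * (R * R) * S)).trace := by
  rw [← sub_pos, ← trace_mul_mul_sub_one_mul_conjTranspose hS hR]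
  exact hA.trace_mul_mul_conjTranspose_pos hSR

end Matrix

lemma msqrt_eq_cfcSqrt {n : ℕ} {A : Matrix (Fin n) (Fin n) ℝ} (h : A.PosSemidef) :
    msqrt A = CFC.sqrt A := by
  rw [msqrt, dif_pos h, CFC.sqrt_eq_cfc, cfc_nnreal_eq_real _ A, h.1.cfc_eq, IsHermitian.cfc,
    Unitary.conjStarAlgAut_apply]
  congr 3
  funext i
  simp [max_eq_left (h.eigenvalues_nonneg i)]

lemma geomMean_eq_cfcSqrt {n : ℕ} {B₀ B₁ : Matrix (Fin n) (Fin n) ℝ} (hB₀ : B₀.PosDef)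
    (hB₁ : B₁.PosSemidef) :
    geomMean B₀ B₁ = CFC.sqrt B₀ *
      CFC.sqrt ((CFC.sqrt B₀)⁻¹ * B₁ * (CFC.sqrt B₀)⁻¹) * CFC.sqrt B₀ := by
  rw [geomMean, msqrt_eq_cfcSqrt hB₀.posSemidef, msqrt_eq_cfcSqrt hB₀.inv.posSemidef,
    ← hB₀.posSemidef.inv_sqrt, msqrt_eq_cfcSqrt (hB₁.inv_sqrt_mul_mul_inv_sqrt B₀)]

/-- Strict geodesic midpoint convexity of `f(B) = tr(A B) + tr(M B⁻¹)` on the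
positive definite manifold, where the geodesic midpoint of `B0` and `B1` is their
geometric mean. -/
theorem stmt_6 {n : ℕ} (A M : Matrix (Fin n) (Fin n) ℝ)
    (hA : A.PosDef) (hM : M.PosDef) :
    ∀ B0 B1 : Matrix (Fin n) (Fin n) ℝ, B0.PosDef → B1.PosDef → B0 ≠ B1 →
      (A * geomMean B0 B1).trace + (M * (geomMean B0 B1)⁻¹).trace <
        (1 / 2 : ℝ) * ((A * B0).trace + (M * B0⁻¹).trace) +
        (1 / 2 : ℝ) * ((A * B1).trace + (M * B1⁻¹).trace) := by
  intro B0 B1 hB0 hB1 hne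
  rw [geomMean_eq_cfcSqrt hB0 hB1.posSemidef]
  set S := CFC.sqrt B0
  set R := CFC.sqrt (S⁻¹ * B1 * S⁻¹)
  have hS : S.IsHermitian := (CFC.sqrt_nonneg B0).posSemidef.isHermitian
  have hR : R.IsHermitian := (CFC.sqrt_nonneg _).posSemidef.isHermitian
  have hS_det : IsUnit S.det :=
    (isUnit_iff_isUnit_det S).mp ((CFC.isUnit_sqrt_iff B0).mpr hB0.isUnit)
  have hB0_eq : B0 = S * S := (CFC.sqrt_mul_sqrt_self B0).symm
  have hB1_eq : B1 = S * (R * R) * S := by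
    rw [CFC.sqrt_mul_sqrt_self _ (hB1.posSemidef.inv_sqrt_mul_mul_inv_sqrt B0).nonneg,
      ← Matrix.mul_assoc, ← Matrix.mul_assoc, mul_nonsing_inv S hS_det, Matrix.one_mul,
      nonsing_inv_mul_cancel_right S B1 hS_det]
  have hSR : S * (R - 1) ≠ 0 := by
    intro h
    have hR1 : R = 1 := sub_eq_zero.mp <| by
      rw [← nonsing_inv_mul_cancel_left S (R - 1) hS_det, h, Matrix.mul_zero]
    exact hne (by rw [hB1_eq, hR1, Matrix.mul_one, Matrix.mul_one, hB0_eq])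
  have hinv : ∀ X Y : Matrix (Fin n) (Fin n) ℝ, (X * Y * X)⁻¹ = X⁻¹ * Y⁻¹ * X⁻¹ := by
    intro X Y
    rw [Matrix.mul_inv_rev, Matrix.mul_inv_rev, Matrix.mul_assoc]
  have hgapA := hA.two_mul_trace_mul_conj_lt hS hR hSR
  have hgapM := hM.posSemidef.two_mul_trace_mul_conj_le hS.inv hR.inv
  rw [hB0_eq, hB1_eq, hinv, hinv, Matrix.mul_inv_rev S, Matrix.mul_inv_rev R]
  linarith
end

section
/- Let Φ be a real m×n matrix, and let H and H0 be real symmetric positive definite n×n matrices such that Σ0 := Φ H0 Φᵀ and Σ := Φ H Φᵀ are positive definite (hence invertible). Then Σ0⁻¹ Φ H0 H⁻¹ H0 Φᵀ Σ0⁻¹ ≽ Σ⁻¹ in the Loewner order, i.e., Σ0⁻¹ Φ H0 H⁻¹ H0 Φᵀ Σ0⁻¹ − (Φ H Φᵀ)⁻¹ is positive semidefinite. -/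
/-!
With `U = Σ₀⁻¹ Φ H₀` and `W = Φ H`, the block matrix `[[U H⁻¹ Uᴴ, 1], [1, Σ]]` is the Gram matrix
`[U; W] H⁻¹ [U; W]ᴴ`, hence positive semidefinite, because `U H⁻¹ Wᴴ = Σ₀⁻¹ Σ₀ = 1` and
`W H⁻¹ Wᴴ = Σ`. Its Schur complement with respect to the positive definite block `Σ` is
`U H⁻¹ Uᴴ - Σ⁻¹`, which is the claimed difference.
-/

open Matrix

namespace Matrix

variable {m n K : Type*} [Fintype m] [Fintype n] [DecidableEq m]
  [Field K] [PartialOrder K] [StarRing K] [StarOrderedRing K]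

theorem PosSemidef.sub_inv_of_mul_mul_conjTranspose_eq_one {M : Matrix n n K} (hM : M.PosSemidef)
    {U W : Matrix m n K} (hUW : U * M * Wᴴ = 1) (hW : (W * M * Wᴴ).PosDef) :
    (U * M * Uᴴ - (W * M * Wᴴ)⁻¹).PosSemidef := by
  have hWU : W * M * Uᴴ = 1 := by
    rw [← conjTranspose_one, ← hUW, conjTranspose_mul, conjTranspose_mul, hM.isHermitian.eq,
      conjTranspose_conjTranspose, Matrix.mul_assoc]
  have gram := hM.mul_mul_conjTranspose_same (fromRows U W)
  rw [conjTranspose_fromRows_eq_fromCols_conjTranspose, fromRows_mul, fromRows_mul_fromCols, hUW,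
    hWU] at gram
  have : Invertible (W * M * Wᴴ) := hW.isUnit.invertible
  have schur := (PosDef.fromBlocks₂₂ _ (1 : Matrix m m K) hW).mp (by rwa [conjTranspose_one])
  rwa [conjTranspose_one, Matrix.mul_one, Matrix.one_mul] at schur

variable [DecidableEq n]

theorem PosDef.posSemidef_inv_sandwich_sub_inv (Φ : Matrix m n K) {H H₀ : Matrix n n K}
    (hH : H.PosDef) (hH₀ : H₀.IsHermitian) (hS₀ : IsUnit (Φ * H₀ * Φᴴ))
    (hS : (Φ * H * Φᴴ).PosDef) :
    ((Φ * H₀ * Φᴴ)⁻¹ * Φ * H₀ * H⁻¹ * H₀ * Φᴴ * (Φ * H₀ * Φᴴ)⁻¹ - (Φ * H * Φᴴ)⁻¹).PosSemidef := by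
  have hHH : H⁻¹ * H = 1 := nonsing_inv_mul H ((isUnit_iff_isUnit_det H).mp hH.isUnit)
  have hinv₀ : (Φ * H₀ * Φᴴ)⁻¹ * (Φ * H₀ * Φᴴ) = 1 :=
    nonsing_inv_mul _ ((isUnit_iff_isUnit_det _).mp hS₀)
  have hUW : ((Φ * H₀ * Φᴴ)⁻¹ * Φ * H₀) * H⁻¹ * (Φ * H)ᴴ = 1 := by
    rw [conjTranspose_mul, hH.isHermitian.eq, ← hinv₀]
    simp only [Matrix.mul_assoc, ← Matrix.mul_assoc H⁻¹, hHH, Matrix.one_mul]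
  have hW : Φ * H * H⁻¹ * (Φ * H)ᴴ = Φ * H * Φᴴ := by
    rw [conjTranspose_mul, hH.isHermitian.eq]
    simp only [Matrix.mul_assoc, ← Matrix.mul_assoc H⁻¹, hHH, Matrix.one_mul]
  have hU : ((Φ * H₀ * Φᴴ)⁻¹ * Φ * H₀) * H⁻¹ * ((Φ * H₀ * Φᴴ)⁻¹ * Φ * H₀)ᴴ
      = (Φ * H₀ * Φᴴ)⁻¹ * Φ * H₀ * H⁻¹ * H₀ * Φᴴ * (Φ * H₀ * Φᴴ)⁻¹ := by
    rw [conjTranspose_mul, conjTranspose_mul, conjTranspose_nonsing_inv, conjTranspose_mul,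
      conjTranspose_mul, conjTranspose_conjTranspose, hH₀.eq]
    simp only [Matrix.mul_assoc]
  rw [← hU, ← hW]
  exact hH.inv.posSemidef.sub_inv_of_mul_mul_conjTranspose_eq_one hUW (hW ▸ hS)

end Matrix

/-- Schur-complement operator inequality underlying the spatial surrogate:
`Σ0⁻¹ Φ H0 H⁻¹ H0 Φᵀ Σ0⁻¹ ≽ (Φ H Φᵀ)⁻¹` in the Loewner order, where
`Σ0 = Φ H0 Φᵀ` and `Σ = Φ H Φᵀ`. -/
theorem stmt_8 {m n : ℕ} (Φ : Matrix (Fin m) (Fin n) ℝ)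
    (H H0 : Matrix (Fin n) (Fin n) ℝ) (hH : H.PosDef) (hH0 : H0.PosDef)
    (hS0 : (Φ * H0 * Φᵀ).PosDef) (hS : (Φ * H * Φᵀ).PosDef) :
    ((Φ * H0 * Φᵀ)⁻¹ * Φ * H0 * H⁻¹ * H0 * Φᵀ * (Φ * H0 * Φᵀ)⁻¹
      - (Φ * H * Φᵀ)⁻¹).PosSemidef := by
  simp only [← conjTranspose_eq_transpose_of_trivial] at hS0 hS ⊢
  exact hH.posSemidef_inv_sandwich_sub_inv Φ hH0.isHermitian hS0.isUnit hS
end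

section
/- Let Φ be a real m×n matrix, let H and H0 be real symmetric positive definite n×n matrices such that Σ0 := Φ H0 Φᵀ and Σ := Φ H Φᵀ are positive definite, and let M be a real symmetric positive semidefinite m×m matrix. Then trace(M Σ⁻¹) ≤ trace(H0 Φᵀ Σ0⁻¹ M Σ0⁻¹ Φ H0 H⁻¹), with equality when H = H0. Consequently, the function H ↦ trace(Φᵀ Σ0⁻¹ Φ H) + trace((H0 Φᵀ Σ0⁻¹ M Σ0⁻¹ Φ H0) H⁻¹) majorizes, up to an additive constant, the spatial cost H ↦ log det(Φ H Φᵀ) + trace(M (Φ H Φᵀ)⁻¹), and the two coincide at H = H0. -/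
/-!
For any `X` with `X Φᵀ = 1` and `E = Xᵀ - H Φᵀ Σ⁻¹`, expanding `Eᵀ H⁻¹ E ≥ 0` gives the Loewner
bound `Σ⁻¹ ≤ X H⁻¹ Xᵀ`; the choice `X = Σ₀⁻¹ Φ H₀` turns it, after pairing with `M`, into the
trace bound, which is tight at `H = H₀`. The log-determinant is concave, so it lies below its
tangent at `Σ₀`: `log det Σ ≤ log det Σ₀ + tr(Σ₀⁻¹ Σ) - m`, which is `log λ ≤ λ - 1` applied to
the eigenvalues of `Σ₀^{-1/2} Σ Σ₀^{-1/2}`, and `tr(Σ₀⁻¹ Σ) = tr(Φᵀ Σ₀⁻¹ Φ H)`.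
-/

open Matrix
open scoped MatrixOrder ComplexOrder

namespace Matrix

variable {m n 𝕜 R : Type*} [Fintype m] [Fintype n]

lemma trace_transpose_mul_mul_mul_comm [CommSemiring R] (Φ : Matrix m n R) (S : Matrix m m R)
    (H : Matrix n n R) : (Φᵀ * S * Φ * H).trace = (S * (Φ * H * Φᵀ)).trace := by
  simp only [Matrix.mul_assoc]
  rw [trace_mul_comm Φᵀ]
  simp only [Matrix.mul_assoc]

variable [DecidableEq m] [DecidableEq n] [RCLike 𝕜]

lemma PosSemidef.trace_mul_nonneg {A B : Matrix n n 𝕜} (hA : A.PosSemidef) (hB : B.PosSemidef) :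
    0 ≤ (A * B).trace := by
  obtain ⟨R, rfl⟩ := CStarAlgebra.nonneg_iff_eq_star_mul_self.mp hA.nonneg
  rw [mul_assoc, trace_mul_comm, star_eq_conjTranspose]
  exact (hB.mul_mul_conjTranspose_same R).trace_nonneg

lemma PosSemidef.trace_mul_le_trace_mul {M A B : Matrix n n 𝕜} (hM : M.PosSemidef)
    (hAB : A ≤ B) : (M * A).trace ≤ (M * B).trace := by
  simpa [mul_sub] using hM.trace_mul_nonneg (le_iff.mp hAB)

lemma PosDef.inv_mul_mul_conjTranspose_le {H : Matrix n n 𝕜} (hH : H.PosDef)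
    {Φ X : Matrix m n 𝕜} (hX : X * Φᴴ = 1) :
    (Φ * H * Φᴴ)⁻¹ ≤ X * H⁻¹ * Xᴴ := by
  have hΦ : Function.Injective Φᴴ.mulVec := fun v w h => by
    simpa [mulVec_mulVec, hX] using congrArg (X *ᵥ ·) h
  have hS : (Φ * H * Φᴴ).PosDef := by
    simpa using hH.conjTranspose_mul_mul_same hΦ
  have hΦX : Φ * Xᴴ = 1 := by simpa using congrArg (·ᴴ) hX
  set S := Φ * H * Φᴴ
  have hH_det : IsUnit H.det := (isUnit_iff_isUnit_det H).mp hH.isUnit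
  have hS_det : IsUnit S.det := (isUnit_iff_isUnit_det S).mp hS.isUnit
  set E := Xᴴ - H * Φᴴ * S⁻¹
  have hEH : Eᴴ = X - S⁻¹ * (Φ * H) := by
    simp [E, conjTranspose_sub, hH.1.eq, hS.inv.1.eq]
  have hE : Eᴴ * H⁻¹ * E = X * H⁻¹ * Xᴴ - S⁻¹ := by
    have hXΦ (Y : Matrix m m 𝕜) : X * (Φᴴ * Y) = Y := by rw [← Matrix.mul_assoc, hX, one_mul]
    have hΦHΦ (Y : Matrix m m 𝕜) : Φ * (H * (Φᴴ * Y)) = S * Y := by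
      simp only [S, Matrix.mul_assoc]
    rw [hEH]
    simp only [E, Matrix.sub_mul, Matrix.mul_sub, Matrix.mul_assoc,
      nonsing_inv_mul_cancel_left _ _ hH_det, mul_nonsing_inv_cancel_left _ _ hH_det,
      nonsing_inv_mul_cancel_left _ _ hS_det, hXΦ, hΦX, hΦHΦ, Matrix.mul_one]
    abel
  rw [le_iff, ← hE]
  exact hH.inv.posSemidef.conjTranspose_mul_mul_same E

lemma trace_mul_inv_le_trace_conj_mul_inv {Φ : Matrix m n ℝ} {H₀ H : Matrix n n ℝ}
    {M : Matrix m m ℝ} (hH₀ : H₀.IsSymm) (hS₀ : IsUnit (Φ * H₀ * Φᵀ).det) (hH : H.PosDef)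
    (hM : M.PosSemidef) :
    (M * (Φ * H * Φᵀ)⁻¹).trace ≤
      ((H₀ * Φᵀ * (Φ * H₀ * Φᵀ)⁻¹ * M * (Φ * H₀ * Φᵀ)⁻¹ * Φ * H₀) * H⁻¹).trace := by
  set S₀ := Φ * H₀ * Φᵀ
  set X := S₀⁻¹ * Φ * H₀
  have hX : X * Φᴴ = 1 := by
    simpa only [X, S₀, conjTranspose_eq_transpose_of_trivial, Matrix.mul_assoc]
      using nonsing_inv_mul _ hS₀
  have hXt : Xᵀ = H₀ * Φᵀ * S₀⁻¹ := by
    have hS₀t : S₀ᵀ = S₀ := by simp [S₀, hH₀.eq, Matrix.mul_assoc]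
    simp [X, transpose_nonsing_inv, hS₀t, hH₀.eq, Matrix.mul_assoc]
  have hle := hM.trace_mul_le_trace_mul (hH.inv_mul_mul_conjTranspose_le hX)
  simp only [conjTranspose_eq_transpose_of_trivial] at hle
  calc (M * (Φ * H * Φᵀ)⁻¹).trace
      ≤ (M * (X * H⁻¹ * Xᵀ)).trace := hle
    _ = (M * X * H⁻¹ * Xᵀ).trace := by simp only [Matrix.mul_assoc]
    _ = (Xᵀ * (M * X * H⁻¹)).trace := trace_mul_comm _ _
    _ = _ := by rw [hXt]; simp only [X, Matrix.mul_assoc]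

lemma trace_conj_mul_inv_self [CommRing R] {Φ : Matrix m n R} {H₀ : Matrix n n R}
    (M : Matrix m m R) (hH₀ : IsUnit H₀.det) (hS₀ : IsUnit (Φ * H₀ * Φᵀ).det) :
    (M * (Φ * H₀ * Φᵀ)⁻¹).trace =
      ((H₀ * Φᵀ * (Φ * H₀ * Φᵀ)⁻¹ * M * (Φ * H₀ * Φᵀ)⁻¹ * Φ * H₀) * H₀⁻¹).trace := by
  set S₀ := Φ * H₀ * Φᵀ
  calc (M * S₀⁻¹).trace
      = (S₀ * (S₀⁻¹ * (M * S₀⁻¹))).trace := by rw [mul_nonsing_inv_cancel_left _ _ hS₀]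
    _ = (Φ * (H₀ * Φᵀ * S₀⁻¹ * M * S₀⁻¹)).trace := by simp only [S₀, Matrix.mul_assoc]
    _ = (H₀ * Φᵀ * S₀⁻¹ * M * S₀⁻¹ * Φ).trace := trace_mul_comm _ _
    _ = _ := by rw [mul_nonsing_inv_cancel_right _ _ hH₀]

lemma PosDef.log_det_le_trace_sub_card {C : Matrix n n ℝ} (hC : C.PosDef) :
    Real.log C.det ≤ C.trace - Fintype.card n := by
  have hev := hC.eigenvalues_pos
  rw [hC.1.det_eq_prod_eigenvalues, hC.1.trace_eq_sum_eigenvalues]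
  simp only [RCLike.ofReal_real_eq_id, id]
  rw [Real.log_prod fun i _ => (hev i).ne']
  calc ∑ i, Real.log (hC.1.eigenvalues i) ≤ ∑ i, (hC.1.eigenvalues i - 1) :=
        Finset.sum_le_sum fun i _ => Real.log_le_sub_one_of_pos (hev i)
    _ = ∑ i, hC.1.eigenvalues i - Fintype.card n := by simp [Finset.sum_sub_distrib]

lemma PosDef.log_det_le_log_det_add_trace_inv_mul_sub_card {A B : Matrix n n ℝ}
    (hA : A.PosDef) (hB : B.PosDef) :
    Real.log A.det ≤ Real.log B.det + (B⁻¹ * A).trace - Fintype.card n := by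
  set R := CFC.sqrt B⁻¹
  have hR : R.PosDef := (IsStrictlyPositive.sqrt _ hB.inv.isStrictlyPositive).posDef
  have hRR : R * R = B⁻¹ := CFC.sqrt_mul_sqrt_self _ hB.inv.posSemidef.nonneg
  have hC : (R * A * R).PosDef := by
    simpa only [hR.1.eq] using
      hA.conjTranspose_mul_mul_same (B := R) (mulVec_injective_iff_isUnit.mpr hR.isUnit)
  have hC_det : (R * A * R).det = B.det⁻¹ * A.det := by
    rw [det_mul, det_mul, mul_comm, ← mul_assoc, ← det_mul, hRR, det_nonsing_inv,
      Ring.inverse_eq_inv']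
  have hC_trace : (R * A * R).trace = (B⁻¹ * A).trace := by
    rw [trace_mul_cycle, hRR]
  have := hC.log_det_le_trace_sub_card
  rw [hC_det, hC_trace, Real.log_mul (inv_ne_zero hB.det_pos.ne') hA.det_pos.ne',
    Real.log_inv] at this
  linarith

end Matrix

/-- Convex bounding of the spatial part of the Type-II cost (Theorem 3 of the
paper): with `Σ0 = Φ H0 Φᵀ` and `Σ = Φ H Φᵀ`, one has
`tr(M Σ⁻¹) ≤ tr(H0 Φᵀ Σ0⁻¹ M Σ0⁻¹ Φ H0 H⁻¹)` with equality at `H = H0`;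
consequently the surrogate
`H ↦ tr(Φᵀ Σ0⁻¹ Φ H) + tr((H0 Φᵀ Σ0⁻¹ M Σ0⁻¹ Φ H0) H⁻¹)` majorizes, up to an
additive constant, the spatial cost `H ↦ log det Σ + tr(M Σ⁻¹)`, and the two
coincide at `H = H0`. -/
theorem stmt_9 {m n : ℕ} (Φ : Matrix (Fin m) (Fin n) ℝ)
    (H0 : Matrix (Fin n) (Fin n) ℝ) (M : Matrix (Fin m) (Fin m) ℝ)
    (hH0 : H0.PosDef) (hM : M.PosSemidef) (hS0 : (Φ * H0 * Φᵀ).PosDef) :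
    (∀ H : Matrix (Fin n) (Fin n) ℝ, H.PosDef → (Φ * H * Φᵀ).PosDef →
      (M * (Φ * H * Φᵀ)⁻¹).trace ≤
        ((H0 * Φᵀ * (Φ * H0 * Φᵀ)⁻¹ * M * (Φ * H0 * Φᵀ)⁻¹ * Φ * H0) * H⁻¹).trace) ∧
    (M * (Φ * H0 * Φᵀ)⁻¹).trace =
      ((H0 * Φᵀ * (Φ * H0 * Φᵀ)⁻¹ * M * (Φ * H0 * Φᵀ)⁻¹ * Φ * H0) * H0⁻¹).trace ∧
    ∃ c : ℝ,
      (∀ H : Matrix (Fin n) (Fin n) ℝ, H.PosDef → (Φ * H * Φᵀ).PosDef →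
        Real.log (Φ * H * Φᵀ).det + (M * (Φ * H * Φᵀ)⁻¹).trace ≤
          (Φᵀ * (Φ * H0 * Φᵀ)⁻¹ * Φ * H).trace +
          ((H0 * Φᵀ * (Φ * H0 * Φᵀ)⁻¹ * M * (Φ * H0 * Φᵀ)⁻¹ * Φ * H0) * H⁻¹).trace
          + c) ∧
      Real.log (Φ * H0 * Φᵀ).det + (M * (Φ * H0 * Φᵀ)⁻¹).trace =
        (Φᵀ * (Φ * H0 * Φᵀ)⁻¹ * Φ * H0).trace +
        ((H0 * Φᵀ * (Φ * H0 * Φᵀ)⁻¹ * M * (Φ * H0 * Φᵀ)⁻¹ * Φ * H0) * H0⁻¹).trace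
        + c := by
  set S₀ := Φ * H0 * Φᵀ
  have hS₀_det : IsUnit S₀.det := (isUnit_iff_isUnit_det S₀).mp hS0.isUnit
  have hH₀_det : IsUnit H0.det := (isUnit_iff_isUnit_det H0).mp hH0.isUnit
  have bound (H : Matrix (Fin n) (Fin n) ℝ) (hH : H.PosDef) :=
    trace_mul_inv_le_trace_conj_mul_inv (isHermitian_iff_isSymm.mp hH0.1) hS₀_det hH hM
  have tight := trace_conj_mul_inv_self M hH₀_det hS₀_det
  refine ⟨fun H hH _ => bound H hH, tight, Real.log S₀.det - m, fun H hH hS => ?_, ?_⟩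
  · have tangent := hS.log_det_le_log_det_add_trace_inv_mul_sub_card hS0
    rw [Fintype.card_fin] at tangent
    rw [trace_transpose_mul_mul_mul_comm]
    linarith [bound H hH]
  · rw [trace_transpose_mul_mul_mul_comm, nonsing_inv_mul _ hS₀_det, trace_one, Fintype.card_fin]
    linarith
end

section
/- Let Q be a complex T×L matrix, let P and P0 be diagonal L×L matrices with strictly positive real diagonal entries, and suppose that B := Q P Q^H and B0 := Q P0 Q^H are Hermitian positive definite T×T matrices (hence invertible), where Q^H denotes the conjugate transpose. Then for every Hermitian positive semidefinite T×T matrix M, trace(M B⁻¹) ≤ trace(P0 Q^H B0⁻¹ M B0⁻¹ Q P0 P⁻¹). -/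
/-!
Write `B = Q P Qᴴ`, `B₀ = Q P₀ Qᴴ` and `D = P₀ P⁻¹ P₀`. The block matrix `[[D, P₀], [P₀, P]]` is
positive semidefinite, its Schur complement with respect to `P` being zero. Conjugating by
`diag(Q, Q)` keeps it positive semidefinite, so its Schur complement with respect to `B`,
namely `Q D Qᴴ - B₀ B⁻¹ B₀`, is positive semidefinite as well. Pairing this Loewner inequality
with the positive semidefinite weight `B₀⁻¹ M B₀⁻¹` under the trace gives the claim, because
`tr(B₀⁻¹ M B₀⁻¹ · B₀ B⁻¹ B₀) = tr(M B⁻¹)`.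
-/

open Matrix
open scoped ComplexOrder

namespace Matrix

variable {𝕜 : Type*} [RCLike 𝕜] {n l : Type*} [Fintype n] [Fintype l]

theorem PosSemidef.trace_mul_nonneg_s16 {W D : Matrix n n 𝕜} (hW : W.PosSemidef)
    (hD : D.PosSemidef) : 0 ≤ (W * D).trace := by
  classical
  open scoped MatrixOrder in
  obtain ⟨X, rfl⟩ := CStarAlgebra.nonneg_iff_eq_star_mul_self.mp hW.nonneg
  rw [star_eq_conjTranspose, Matrix.mul_assoc, trace_mul_comm]
  exact (hD.mul_mul_conjTranspose_same X).trace_nonneg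

theorem PosSemidef.trace_mul_le_trace_mul_s16 {W C D : Matrix n n 𝕜} (hW : W.PosSemidef)
    (hCD : (D - C).PosSemidef) : (W * C).trace ≤ (W * D).trace := by
  rw [← sub_nonneg, ← trace_sub, ← Matrix.mul_sub]
  exact hW.trace_mul_nonneg_s16 hCD

theorem PosDef.posSemidef_sub_mul_inv_mul [DecidableEq n] [DecidableEq l]
    {P P₀ : Matrix l l 𝕜} (hP : P.PosDef) (hP₀ : P₀.IsHermitian) (Q : Matrix n l 𝕜)
    (hB : (Q * P * Qᴴ).PosDef) :
    (Q * (P₀ * P⁻¹ * P₀) * Qᴴ - Q * P₀ * Qᴴ * (Q * P * Qᴴ)⁻¹ * (Q * P₀ * Qᴴ)).PosSemidef := by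
  have : Invertible P := hP.isUnit.invertible
  have : Invertible (Q * P * Qᴴ) := hB.isUnit.invertible
  have hBlock : (fromBlocks (P₀ * P⁻¹ * P₀) P₀ P₀ᴴ P).PosSemidef := by
    rw [PosDef.fromBlocks₂₂ _ _ hP, hP₀.eq, sub_self]
    exact .zero
  have hB₀ : (Q * P₀ * Qᴴ)ᴴ = Q * P₀ * Qᴴ := by
    rw [conjTranspose_mul, conjTranspose_mul, conjTranspose_conjTranspose, hP₀.eq,
      Matrix.mul_assoc]
  have hConj : fromBlocks Q 0 0 Q * fromBlocks (P₀ * P⁻¹ * P₀) P₀ P₀ᴴ P * (fromBlocks Q 0 0 Q)ᴴ =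
      fromBlocks (Q * (P₀ * P⁻¹ * P₀) * Qᴴ) (Q * P₀ * Qᴴ) (Q * P₀ * Qᴴ)ᴴ (Q * P * Qᴴ) := by
    simp only [fromBlocks_conjTranspose, fromBlocks_multiply, conjTranspose_zero, Matrix.mul_zero,
      Matrix.zero_mul, add_zero, zero_add, hB₀, hP₀.eq]
  have hConjBlock := hBlock.mul_mul_conjTranspose_same (fromBlocks Q 0 0 Q)
  rwa [hConj, PosDef.fromBlocks₂₂ _ _ hB, hB₀] at hConjBlock

end Matrix

theorem stmt_16_general {T L : ℕ} (Q : Matrix (Fin T) (Fin L) ℂ) (p p0 : Fin L → ℝ)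
    (hp : ∀ l, 0 < p l)
    (hB : (Q * Matrix.diagonal (fun l => (p l : ℂ)) * Qᴴ).PosDef)
    (hB0 : (Q * Matrix.diagonal (fun l => (p0 l : ℂ)) * Qᴴ).PosDef)
    (M : Matrix (Fin T) (Fin T) ℂ) (hM : M.PosSemidef) :
    (M * (Q * Matrix.diagonal (fun l => (p l : ℂ)) * Qᴴ)⁻¹).trace ≤
      (Matrix.diagonal (fun l => (p0 l : ℂ)) * Qᴴ *
        (Q * Matrix.diagonal (fun l => (p0 l : ℂ)) * Qᴴ)⁻¹ * M *
        (Q * Matrix.diagonal (fun l => (p0 l : ℂ)) * Qᴴ)⁻¹ * Q *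
        Matrix.diagonal (fun l => (p0 l : ℂ)) *
        (Matrix.diagonal (fun l => (p l : ℂ)))⁻¹).trace := by
  set P := Matrix.diagonal (fun l => (p l : ℂ))
  set P₀ := Matrix.diagonal (fun l => (p0 l : ℂ))
  set B₀ := Q * P₀ * Qᴴ
  have : Invertible B₀ := hB0.isUnit.invertible
  have hP : P.PosDef := .diagonal fun l => by exact_mod_cast hp l
  have hP₀ : P₀.IsHermitian := isHermitian_diagonal_iff.mpr fun l => Complex.conj_ofReal _
  have hW : (B₀⁻¹ * M * B₀⁻¹).PosSemidef := by
    simpa only [hB0.inv.isHermitian.eq] using hM.mul_mul_conjTranspose_same B₀⁻¹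
  calc (M * (Q * P * Qᴴ)⁻¹).trace
      = (B₀⁻¹ * M * B₀⁻¹ * (B₀ * (Q * P * Qᴴ)⁻¹ * B₀)).trace := by
        rw [show B₀⁻¹ * M * B₀⁻¹ * (B₀ * (Q * P * Qᴴ)⁻¹ * B₀) =
            B₀⁻¹ * (M * (Q * P * Qᴴ)⁻¹ * B₀) by
          simp only [Matrix.mul_assoc, inv_mul_cancel_left_of_invertible],
          trace_mul_comm B₀⁻¹, mul_inv_cancel_right_of_invertible]
    _ ≤ (B₀⁻¹ * M * B₀⁻¹ * (Q * (P₀ * P⁻¹ * P₀) * Qᴴ)).trace :=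
        hW.trace_mul_le_trace_mul_s16 (hP.posSemidef_sub_mul_inv_mul hP₀ Q hB)
    _ = (P₀ * Qᴴ * B₀⁻¹ * M * B₀⁻¹ * Q * P₀ * P⁻¹).trace := by
        simp only [Matrix.mul_assoc]
        rw [trace_mul_comm P₀]
        simp only [Matrix.mul_assoc]
        rw [trace_mul_comm Qᴴ]
        simp only [Matrix.mul_assoc]

/-- Schur-complement majorization step for the Toeplitz/circulant temporal update
(thin Dugh, Theorem 7 of the paper): with `B = Q P Qᴴ` and `B0 = Q P0 Qᴴ`
Hermitian positive definite, `P, P0` diagonal with strictly positive real entries,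
and `M` Hermitian positive semidefinite,
`tr(M B⁻¹) ≤ tr(P0 Qᴴ B0⁻¹ M B0⁻¹ Q P0 P⁻¹)`. -/
theorem stmt_16 {T L : ℕ} (Q : Matrix (Fin T) (Fin L) ℂ) (p p0 : Fin L → ℝ)
    (hp : ∀ l, 0 < p l) (hp0 : ∀ l, 0 < p0 l)
    (hB : (Q * Matrix.diagonal (fun l => (p l : ℂ)) * Qᴴ).PosDef)
    (hB0 : (Q * Matrix.diagonal (fun l => (p0 l : ℂ)) * Qᴴ).PosDef)
    (M : Matrix (Fin T) (Fin T) ℂ) (hM : M.PosSemidef) :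
    (M * (Q * Matrix.diagonal (fun l => (p l : ℂ)) * Qᴴ)⁻¹).trace ≤
      (Matrix.diagonal (fun l => (p0 l : ℂ)) * Qᴴ *
        (Q * Matrix.diagonal (fun l => (p0 l : ℂ)) * Qᴴ)⁻¹ * M *
        (Q * Matrix.diagonal (fun l => (p0 l : ℂ)) * Qᴴ)⁻¹ * Q *
        Matrix.diagonal (fun l => (p0 l : ℂ)) *
        (Matrix.diagonal (fun l => (p l : ℂ)))⁻¹).trace :=
  stmt_16_general Q p p0 hp hB hB0 M hM
end
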